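/- Let ψ ∈ C_c^∞(ℝ³), ψ ≢ 0, with ∫ψ = 0, fix L large so that the supports of ψ(· - kLe₁), k = 1,...,N, are pairwise disjoint, and set f_N(x) = Σ_{k=1}^N k^{-1/3} ψ(x - kLe₁). Then: (1) ‖f_N‖_{L^{3,∞}(ℝ³)} ≤ C with C independent of N; (2) ‖f_N‖_{Ḃ^{1/2}_{2,∞}} ≥ c N^{1/6} for some c > 0 and all large N. Consequently L^{3,∞}(ℝ³) is not contained in Ḃ^{1/2}_{2,∞}(ℝ³). -/

import Mathlib

open MeasureTheory
open scoped ENNReal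

/-- The weak-`L^p` (Lorentz `L^{p,∞}`) quasinorm `sup_{t>0} t · |{|f| > t}|^{1/p}`. -/
noncomputable def weakLpNorm {α : Type*} [MeasurableSpace α] (μ : Measure α) (p : ℝ)
    (f : α → ℝ) : ℝ≥0∞ :=
  ⨆ (t : ℝ) (_ : 0 < t), ENNReal.ofReal t * μ {x | t < |f x|} ^ (1 / p)

/-- The homogeneous Besov `Ḃ^{1/2}_{2,∞}(ℝ³)` norm, via its finite-difference
characterization `sup_{h≠0} |h|^{-1/2} ‖f(·+h) - f‖_{L²}`. -/
noncomputable def besovHalfNorm (f : EuclideanSpace ℝ (Fin 3) → ℝ) : ℝ≥0∞ :=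
  ⨆ (h : EuclideanSpace ℝ (Fin 3)) (_ : h ≠ 0),
    ENNReal.ofReal (‖h‖ ^ (-(1 : ℝ) / 2)) * eLpNorm (fun x => f (x + h) - f x) 2 volume

section Aux
open Metric Set

noncomputable def e1aux : EuclideanSpace ℝ (Fin 3) := EuclideanSpace.single (0 : Fin 3) (1 : ℝ)
noncomputable def vkaux (L : ℝ) (k : ℕ) : EuclideanSpace ℝ (Fin 3) := ((k : ℝ) * L) • e1aux

lemma norm_e1aux : ‖e1aux‖ = 1 := by rw [e1aux, EuclideanSpace.norm_single]; norm_num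

lemma vk_sub_norm (L : ℝ) (hL : 0 ≤ L) (k j : ℕ) :
    ‖vkaux L k - vkaux L j‖ = |(k:ℝ) - (j:ℝ)| * L := by
  rw [vkaux, vkaux, ← sub_smul, ← sub_mul, norm_smul, norm_e1aux, mul_one,
    Real.norm_eq_abs, abs_mul, abs_of_nonneg hL]

lemma le_vk_sub_norm {L : ℝ} (hL : 0 ≤ L) {k j : ℕ} (h : k ≠ j) :
    L ≤ ‖vkaux L k - vkaux L j‖ := by
  rw [vk_sub_norm L hL]
  have h1 : (1:ℝ) ≤ |(k:ℝ) - (j:ℝ)| := by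
    rcases h.lt_or_gt with hlt | hlt
    · rw [abs_sub_comm, abs_of_nonneg (sub_nonneg.mpr (by exact_mod_cast hlt.le))]
      have : (k:ℝ) + 1 ≤ j := by exact_mod_cast hlt
      linarith
    · rw [abs_of_nonneg (sub_nonneg.mpr (by exact_mod_cast hlt.le))]
      have : (j:ℝ) + 1 ≤ k := by exact_mod_cast hlt
      linarith
  nlinarith

lemma psi_zero_aux {ψ : EuclideanSpace ℝ (Fin 3) → ℝ} {R : ℝ}
    (hs : tsupport ψ ⊆ closedBall 0 R) {u : EuclideanSpace ℝ (Fin 3)} (hu : R < ‖u‖) :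
    ψ u = 0 := by
  by_contra h
  exact absurd (mem_closedBall_zero_iff.mp (hs (subset_tsupport ψ h))) (not_le.mpr hu)

lemma psi_norm_le_aux {ψ : EuclideanSpace ℝ (Fin 3) → ℝ} {R : ℝ}
    (hs : tsupport ψ ⊆ closedBall 0 R) {u : EuclideanSpace ℝ (Fin 3)} (hu : ψ u ≠ 0) :
    ‖u‖ ≤ R := by
  by_contra h
  exact hu (psi_zero_aux hs (not_le.mp h))

lemma norm_add_lower {a b : EuclideanSpace ℝ (Fin 3)} {r s : ℝ}
    (h1 : r ≤ ‖a‖) (h2 : ‖b‖ ≤ s) : r - s ≤ ‖a + b‖ := by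
  have h := norm_sub_norm_le a (-b)
  rw [sub_neg_eq_add, norm_neg] at h
  linarith

lemma lint_shift (ψ : EuclideanSpace ℝ (Fin 3) → ℝ) {R : ℝ}
    (hs : tsupport ψ ⊆ closedBall 0 R) (c : EuclideanSpace ℝ (Fin 3)) :
    ∫⁻ x in closedBall c R, ENNReal.ofReal ((ψ (x - c))^2)
      = ∫⁻ u, ENNReal.ofReal ((ψ u)^2) := by
  rw [← lintegral_indicator measurableSet_closedBall]
  have h1 : ∀ x, (closedBall c R).indicator (fun x => ENNReal.ofReal ((ψ (x - c))^2)) x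
      = (closedBall (0:EuclideanSpace ℝ (Fin 3)) R).indicator
          (fun u => ENNReal.ofReal ((ψ u)^2)) (x + (-c)) := by
    intro x
    by_cases hx : x ∈ closedBall c R
    · rw [indicator_of_mem hx, ← sub_eq_add_neg,
        indicator_of_mem (by rwa [mem_closedBall_zero_iff, ← mem_closedBall_iff_norm])]
    · rw [indicator_of_notMem hx, ← sub_eq_add_neg,
        indicator_of_notMem (by rwa [mem_closedBall_zero_iff, ← mem_closedBall_iff_norm])]
  rw [lintegral_congr h1, lintegral_add_right_eq_self]
  refine lintegral_congr fun u => ?_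
  by_cases hu : u ∈ closedBall (0:EuclideanSpace ℝ (Fin 3)) R
  · rw [indicator_of_mem hu]
  · rw [indicator_of_notMem hu,
      psi_zero_aux hs (not_le.mp (fun hle => hu (mem_closedBall_zero_iff.mpr hle)))]
    simp

lemma weakBoundAux {R M : ℝ} (hR : 1 ≤ R) (hM : 1 ≤ M) (L : ℝ)
    (F : EuclideanSpace ℝ (Fin 3) → ℝ)
    (hF : ∀ y, F y ≠ 0 → ∃ k : ℕ, 1 ≤ k ∧ |F y| ≤ (k:ℝ) ^ (-(1:ℝ)/3) * M ∧
      y ∈ closedBall (vkaux L k) R) :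
    weakLpNorm volume 3 F ≤
      ENNReal.ofReal (M * (volume (closedBall (0:EuclideanSpace ℝ (Fin 3)) R)).toReal
        ^ ((1:ℝ)/3) + 1) := by
  set Vr : ℝ≥0∞ := volume (closedBall (0:EuclideanSpace ℝ (Fin 3)) R) with hVr
  have hVtop : Vr ≠ ⊤ := (measure_closedBall_lt_top).ne
  have hVpos : 0 < Vr := measure_closedBall_pos _ _ (by linarith)
  refine iSup_le fun t => iSup_le fun ht => ?_
  set K : ℕ := ⌊(M/t)^(3:ℕ)⌋₊ with hK
  have hincl : {x | t < |F x|} ⊆ ⋃ k ∈ Finset.Icc 1 K, closedBall (vkaux L k) R := by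
    intro y hy
    have hy' : t < |F y| := hy
    have hFy : F y ≠ 0 := by
      intro h0; rw [h0] at hy'; simp at hy'; linarith
    obtain ⟨k, hk1, hkle, hkball⟩ := hF y hFy
    have hkpos : (0:ℝ) < k := by exact_mod_cast hk1
    have ht3 : t < (k:ℝ) ^ (-(1:ℝ)/3) * M := lt_of_lt_of_le hy' hkle
    have hkK : k ≤ K := by
      have hp : (0:ℝ) < (k:ℝ)^((1:ℝ)/3) := Real.rpow_pos_of_pos hkpos _
      have h1 : (k:ℝ)^((1:ℝ)/3) * t < M := by
        calc (k:ℝ)^((1:ℝ)/3) * t < (k:ℝ)^((1:ℝ)/3) * ((k:ℝ)^(-(1:ℝ)/3) * M) :=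
              mul_lt_mul_of_pos_left ht3 hp
          _ = M := by rw [← mul_assoc, ← Real.rpow_add hkpos]; norm_num
      have h3 : (k:ℝ)^((1:ℝ)/3) < M / t := (lt_div_iff₀ ht).mpr h1
      have hklt : (k:ℝ) < (M/t)^(3:ℕ) := by
        calc (k:ℝ) = ((k:ℝ)^((1:ℝ)/3))^(3:ℕ) := by
              rw [← Real.rpow_natCast ((k:ℝ)^((1:ℝ)/3)), ← Real.rpow_mul hkpos.le]; norm_num
          _ < (M/t)^(3:ℕ) := pow_lt_pow_left₀ h3 hp.le (by norm_num)
      exact Nat.le_floor hklt.le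
    exact mem_biUnion (Finset.mem_Icc.mpr ⟨hk1, hkK⟩) hkball
  have hmeas : volume {x | t < |F x|} ≤ ENNReal.ofReal ((M/t)^(3:ℕ)) * Vr := by
    calc volume {x | t < |F x|}
        ≤ volume (⋃ k ∈ Finset.Icc 1 K, closedBall (vkaux L k) R) := measure_mono hincl
      _ ≤ ∑ k ∈ Finset.Icc 1 K, volume (closedBall (vkaux L k) R) :=
          measure_biUnion_finset_le _ _
      _ = ∑ k ∈ Finset.Icc 1 K, Vr := by
          refine Finset.sum_congr rfl fun k _ => ?_
          rw [hVr]; exact Measure.addHaar_closedBall_center _ _ _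
      _ = (K : ℝ≥0∞) * Vr := by
          rw [Finset.sum_const, Nat.card_Icc]; simp [nsmul_eq_mul]
      _ ≤ ENNReal.ofReal ((M/t)^(3:ℕ)) * Vr := by
          gcongr
          rw [← ENNReal.ofReal_natCast]
          exact ENNReal.ofReal_le_ofReal (Nat.floor_le (by positivity))
  calc ENNReal.ofReal t * volume {x | t < |F x|} ^ ((1:ℝ)/3)
      ≤ ENNReal.ofReal t * (ENNReal.ofReal ((M/t)^(3:ℕ)) * Vr) ^ ((1:ℝ)/3) :=
        mul_le_mul_right (ENNReal.rpow_le_rpow hmeas (by norm_num)) _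
    _ = ENNReal.ofReal t * (ENNReal.ofReal ((M/t)^(3:ℕ))) ^ ((1:ℝ)/3) * Vr ^ ((1:ℝ)/3) := by
        rw [ENNReal.mul_rpow_of_nonneg _ _ (by norm_num), mul_assoc]
    _ = ENNReal.ofReal M * Vr ^ ((1:ℝ)/3) := by
        congr 1
        have hMt : (0:ℝ) < M / t := by positivity
        rw [ENNReal.ofReal_rpow_of_pos (by positivity)]
        rw [← ENNReal.ofReal_mul ht.le]
        congr 1
        rw [← Real.rpow_natCast (M/t) 3, ← Real.rpow_mul hMt.le]
        norm_num
        field_simp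
    _ = ENNReal.ofReal (M * Vr.toReal ^ ((1:ℝ)/3)) := by
        rw [ENNReal.ofReal_mul (by linarith),
          ← ENNReal.ofReal_rpow_of_pos (ENNReal.toReal_pos hVpos.ne' hVtop),
          ENNReal.ofReal_toReal hVtop]
    _ ≤ ENNReal.ofReal (M * Vr.toReal ^ ((1:ℝ)/3) + 1) :=
        ENNReal.ofReal_le_ofReal (by linarith)

lemma keyLowerAux (ψ : EuclideanSpace ℝ (Fin 3) → ℝ) {R : ℝ} (hR : 1 ≤ R)
    (hs : tsupport ψ ⊆ closedBall 0 R) {L : ℝ} (hL : 2*R < L)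
    (hvec : EuclideanSpace ℝ (Fin 3)) (N : ℕ) (F : EuclideanSpace ℝ (Fin 3) → ℝ)
    (hF : ∀ k, 1 ≤ k → k ≤ N → ∀ x ∈ closedBall (vkaux L k - hvec) R,
      F x = (k:ℝ) ^ (-(1:ℝ)/3) * ψ (x + hvec - vkaux L k)) :
    ENNReal.ofReal ((N:ℝ) ^ ((1:ℝ)/3)) * (∫⁻ u, ENNReal.ofReal ((ψ u)^2)) ≤
      ∫⁻ x, ENNReal.ofReal ((F x)^2) := by
  rcases Nat.eq_zero_or_pos N with h0 | hN
  · subst h0; simp [Real.zero_rpow (by norm_num : ((1:ℝ)/3) ≠ 0)]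
  have hNpos : (0:ℝ) < N := by exact_mod_cast hN
  have hL0 : (0:ℝ) ≤ L := by linarith
  set Eψ := ∫⁻ u, ENNReal.ofReal ((ψ u)^2) with hEψ
  set Bs : ℕ → Set (EuclideanSpace ℝ (Fin 3)) :=
    fun k => if 1 ≤ k ∧ k ≤ N then closedBall (vkaux L k - hvec) R else ∅ with hBs
  have hmeasB : ∀ k, MeasurableSet (Bs k) := fun k => by
    rw [hBs]; dsimp only; split_ifs
    exacts [measurableSet_closedBall, MeasurableSet.empty]
  have hdisj : Pairwise (Function.onFun Disjoint Bs) := by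
    intro j k hjk
    rw [Function.onFun, hBs]; dsimp only
    split_ifs with h1 h2
    · apply closedBall_disjoint_closedBall
      have hd := le_vk_sub_norm (L := L) hL0 (Ne.symm hjk)
      rw [dist_eq_norm, sub_sub_sub_cancel_right, ← norm_neg, neg_sub]
      linarith
    · exact disjoint_bot_right
    · exact disjoint_bot_left
    · exact disjoint_bot_left
  have hterm : ∀ k, 1 ≤ k → k ≤ N →
      ∫⁻ x in Bs k, ENNReal.ofReal ((F x)^2)
        = ENNReal.ofReal ((k:ℝ)^(-(2:ℝ)/3)) * Eψ := by
    intro k hk1 hkN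
    have hkpos : (0:ℝ) < k := by exact_mod_cast hk1
    have hBk : Bs k = closedBall (vkaux L k - hvec) R := by rw [hBs]; simp [hk1, hkN]
    rw [hBk]
    have hcongr : ∫⁻ x in closedBall (vkaux L k - hvec) R, ENNReal.ofReal ((F x)^2)
        = ∫⁻ x in closedBall (vkaux L k - hvec) R,
            ENNReal.ofReal ((k:ℝ)^(-(2:ℝ)/3))
              * ENNReal.ofReal ((ψ (x - (vkaux L k - hvec)))^2) := by
      refine setLIntegral_congr_fun measurableSet_closedBall (fun x hx => ?_)
      rw [hF k hk1 hkN x hx, mul_pow, ← ENNReal.ofReal_mul (by positivity)]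
      congr 2
      · rw [← Real.rpow_natCast ((k:ℝ)^(-(1:ℝ)/3)) 2, ← Real.rpow_mul hkpos.le]
        norm_num
      · abel_nf
    rw [hcongr, lintegral_const_mul' _ _ ENNReal.ofReal_ne_top, lint_shift ψ hs _]
  have hNr : (N:ℝ) * (N:ℝ)^(-(2:ℝ)/3) = (N:ℝ)^((1:ℝ)/3) := by
    have h := (Real.rpow_add hNpos 1 (-(2:ℝ)/3)).symm
    rw [Real.rpow_one] at h
    convert h using 2
    norm_num
  calc ENNReal.ofReal ((N:ℝ)^((1:ℝ)/3)) * Eψ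
      = ∑ _k ∈ Finset.Icc 1 N, ENNReal.ofReal ((N:ℝ)^(-(2:ℝ)/3)) * Eψ := by
        rw [Finset.sum_const, Nat.card_Icc, nsmul_eq_mul]
        simp only [Nat.add_sub_cancel]
        rw [← mul_assoc, ← ENNReal.ofReal_natCast, ← ENNReal.ofReal_mul (by positivity), hNr]
    _ ≤ ∑ k ∈ Finset.Icc 1 N, ∫⁻ x in Bs k, ENNReal.ofReal ((F x)^2) := by
        refine Finset.sum_le_sum fun k hk => ?_
        obtain ⟨hk1, hkN⟩ := Finset.mem_Icc.mp hk
        rw [hterm k hk1 hkN]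
        have hkpos : (0:ℝ) < k := by exact_mod_cast hk1
        refine mul_le_mul_left (ENNReal.ofReal_le_ofReal ?_) _
        exact Real.rpow_le_rpow_of_nonpos hkpos (by exact_mod_cast hkN) (by norm_num)
    _ ≤ ∑' k, ∫⁻ x in Bs k, ENNReal.ofReal ((F x)^2) := ENNReal.sum_le_tsum _
    _ = ∫⁻ x, ENNReal.ofReal ((F x)^2) ∂(Measure.sum fun k => volume.restrict (Bs k)) :=
        (lintegral_sum_measure _ _).symm
    _ = ∫⁻ x, ENNReal.ofReal ((F x)^2) ∂(volume.restrict (⋃ k, Bs k)) := by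
        rw [Measure.restrict_iUnion hdisj hmeasB]
    _ ≤ ∫⁻ x, ENNReal.ofReal ((F x)^2) := lintegral_mono' Measure.restrict_le_self le_rfl

lemma eLpNorm_sq_aux (g : EuclideanSpace ℝ (Fin 3) → ℝ) :
    eLpNorm g 2 volume = (∫⁻ x, ENNReal.ofReal ((g x)^2)) ^ ((1:ℝ)/2) := by
  rw [eLpNorm_eq_lintegral_rpow_enorm_toReal (by norm_num) (by norm_num)]
  norm_num
  congr 1
  refine lintegral_congr fun x => ?_
  rw [← ofReal_norm, ← ENNReal.ofReal_pow (norm_nonneg _),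
    Real.norm_eq_abs, sq_abs]

lemma besovLowerAux (f : EuclideanSpace ℝ (Fin 3) → ℝ)
    {hvec : EuclideanSpace ℝ (Fin 3)} (hne : hvec ≠ 0)
    (I : ℝ≥0∞) (hI : I ≤ ∫⁻ x, ENNReal.ofReal ((f (x + hvec) - f x)^2)) :
    ENNReal.ofReal (‖hvec‖ ^ (-(1:ℝ)/2)) * I ^ ((1:ℝ)/2) ≤ besovHalfNorm f := by
  have h1 : ENNReal.ofReal (‖hvec‖ ^ (-(1:ℝ)/2)) * I ^ ((1:ℝ)/2)
      ≤ ENNReal.ofReal (‖hvec‖ ^ (-(1:ℝ)/2))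
          * eLpNorm (fun x => f (x + hvec) - f x) 2 volume := by
    rw [eLpNorm_sq_aux]
    exact mul_le_mul_right (ENNReal.rpow_le_rpow hI (by norm_num)) _
  refine h1.trans ?_
  exact le_iSup_of_le hvec (le_iSup_of_le hne le_rfl)

end Aux

/-- For `ψ ∈ C_c^∞(ℝ³)`, `ψ ≢ 0`, `∫ψ = 0`, the superpositions
`f_N = Σ_{k=1}^N k^{-1/3} ψ(· - kLe₁)` (with `L` large) are bounded in `L^{3,∞}` uniformly
in `N`, but `‖f_N‖_{Ḃ^{1/2}_{2,∞}} ≥ c N^{1/6}` for large `N`.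
Consequently `L^{3,∞}(ℝ³) ⊄ Ḃ^{1/2}_{2,∞}(ℝ³)`. -/
theorem stmt_18 (ψ : EuclideanSpace ℝ (Fin 3) → ℝ)
    (hsm : ContDiff ℝ (⊤ : ℕ∞) ψ) (hcs : HasCompactSupport ψ) (hne : ψ ≠ 0)
    (hmean : ∫ x, ψ x = 0) :
    (∃ L₀ ≥ (1 : ℝ), ∃ C > (0 : ℝ), ∃ c > (0 : ℝ), ∃ N₀ : ℕ,
      ∀ L ≥ L₀, ∀ N : ℕ,
        weakLpNorm volume 3
            (fun y => ∑ k ∈ Finset.Icc 1 N,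
              (k : ℝ) ^ (-(1 : ℝ) / 3) *
                ψ (y - ((k : ℝ) * L) • EuclideanSpace.single (0 : Fin 3) (1 : ℝ)))
          ≤ ENNReal.ofReal C ∧
        (N₀ ≤ N →
          ENNReal.ofReal (c * (N : ℝ) ^ ((1 : ℝ) / 6))
            ≤ besovHalfNorm
                (fun y => ∑ k ∈ Finset.Icc 1 N,
                  (k : ℝ) ^ (-(1 : ℝ) / 3) *
                    ψ (y - ((k : ℝ) * L) • EuclideanSpace.single (0 : Fin 3) (1 : ℝ))))) ∧
    (∃ f : EuclideanSpace ℝ (Fin 3) → ℝ,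
      weakLpNorm volume 3 f < ⊤ ∧ besovHalfNorm f = ⊤) := by
  classical
  obtain ⟨R₀, hR₀⟩ := hcs.isBounded.subset_closedBall 0
  set R := max R₀ 1 with hRdef
  have hR : 1 ≤ R := le_max_right _ _
  have hRs : tsupport ψ ⊆ Metric.closedBall 0 R :=
    hR₀.trans (Metric.closedBall_subset_closedBall (le_max_left _ _))
  obtain ⟨M₀, hM₀⟩ := hsm.continuous.bounded_above_of_compact_support hcs
  set M := max M₀ 1 with hMdef
  have hM : 1 ≤ M := le_max_right _ _
  have hMb : ∀ x, |ψ x| ≤ M := fun x =>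
    le_trans (le_of_eq (Real.norm_eq_abs (ψ x)).symm) ((hM₀ x).trans (le_max_left _ _))
  set δ : ℝ := 2*R + 1 with hδdef
  have hδpos : (0:ℝ) < δ := by rw [hδdef]; linarith
  set hv : EuclideanSpace ℝ (Fin 3) := δ • e1aux with hhv
  have hnv : ‖hv‖ = δ := by
    rw [hhv, norm_smul, norm_e1aux, mul_one, Real.norm_eq_abs, abs_of_pos hδpos]
  have hvne : hv ≠ 0 := by
    intro h
    rw [h, norm_zero] at hnv
    exact absurd hnv.symm (ne_of_gt hδpos)
  set Vr := volume (Metric.closedBall (0:EuclideanSpace ℝ (Fin 3)) R) with hVrdef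
  have hVtop : Vr ≠ ⊤ := (measure_closedBall_lt_top).ne
  set Eψ := ∫⁻ u, ENNReal.ofReal ((ψ u)^2) with hEψdef
  have hcont := hsm.continuous
  have hEtop : Eψ ≠ ⊤ := by
    have hle : Eψ ≤ ENNReal.ofReal (M^2) * Vr := by
      rw [hEψdef]
      calc ∫⁻ u, ENNReal.ofReal ((ψ u)^2)
          ≤ ∫⁻ u, (Metric.closedBall (0:EuclideanSpace ℝ (Fin 3)) R).indicator
              (fun _ => ENNReal.ofReal (M^2)) u := by
            refine lintegral_mono fun u => ?_
            by_cases hu : u ∈ Metric.closedBall (0:EuclideanSpace ℝ (Fin 3)) R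
            · rw [Set.indicator_of_mem hu]
              refine ENNReal.ofReal_le_ofReal ?_
              have := hMb u
              nlinarith [abs_nonneg (ψ u), sq_abs (ψ u)]
            · rw [Set.indicator_of_notMem hu,
                psi_zero_aux hRs (not_le.mp (fun hle' => hu (mem_closedBall_zero_iff.mpr hle')))]
              simp
        _ = ENNReal.ofReal (M^2) * Vr := by
            rw [lintegral_indicator measurableSet_closedBall, setLIntegral_const]
    exact (lt_of_le_of_lt hle
      (ENNReal.mul_lt_top ENNReal.ofReal_lt_top hVtop.lt_top)).ne
  have hEne : Eψ ≠ 0 := by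
    intro h0
    have hmeas : Measurable fun u => ENNReal.ofReal ((ψ u)^2) :=
      ((hcont.pow 2).measurable).ennreal_ofReal
    have hae : (fun u => ENNReal.ofReal ((ψ u)^2)) =ᵐ[volume] 0 :=
      (lintegral_eq_zero_iff hmeas).mp h0
    have hψae : ψ =ᵐ[volume] (fun _ => (0:ℝ)) := by
      filter_upwards [hae] with u hu
      have : ENNReal.ofReal ((ψ u)^2) = 0 := hu
      have h2 : (ψ u)^2 ≤ 0 := ENNReal.ofReal_eq_zero.mp this
      nlinarith [sq_nonneg (ψ u)]
    exact hne (hcont.ae_eq_iff_eq volume continuous_const |>.mp hψae)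
  set eR := Eψ.toReal with heRdef
  have heRpos : 0 < eR := ENNReal.toReal_pos hEne hEtop
  set C := M * Vr.toReal ^ ((1:ℝ)/3) + 1 with hCdef
  have hCpos : 0 < C := by
    have h1 : (0:ℝ) ≤ Vr.toReal ^ ((1:ℝ)/3) := Real.rpow_nonneg ENNReal.toReal_nonneg _
    rw [hCdef]
    nlinarith
  set c := δ^(-(1:ℝ)/2) * eR^((1:ℝ)/2) with hcdef
  have hcpos : 0 < c := by
    have h1 : (0:ℝ) < δ^(-(1:ℝ)/2) := Real.rpow_pos_of_pos hδpos _
    have h2 : (0:ℝ) < eR^((1:ℝ)/2) := Real.rpow_pos_of_pos heRpos _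
    positivity
  -- uniqueness of the active bump
  have huniq : ∀ L : ℝ, 6*R+6 ≤ L → ∀ y : EuclideanSpace ℝ (Fin 3), ∀ j k : ℕ,
      j ≠ k → ψ (y - vkaux L k) ≠ 0 → ψ (y - vkaux L j) = 0 := by
    intro L hL y j k hjk hk
    by_contra hj
    have h1 := psi_norm_le_aux hRs hk
    have h2 := psi_norm_le_aux hRs hj
    have h3 := le_vk_sub_norm (show (0:ℝ) ≤ L by linarith) (Ne.symm hjk)
    have h4 : ‖vkaux L k - vkaux L j‖ ≤ ‖y - vkaux L j‖ + ‖y - vkaux L k‖ := by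
      have he : vkaux L k - vkaux L j = (y - vkaux L j) - (y - vkaux L k) := by abel
      rw [he]
      exact norm_sub_le _ _
    linarith
  -- pointwise vanishing estimates on the shifted balls
  have hptest : ∀ L : ℝ, 6*R+6 ≤ L → ∀ k : ℕ, ∀ x ∈ Metric.closedBall (vkaux L k - hv) R,
      (∀ j : ℕ, j ≠ k → ψ (x + hv - vkaux L j) = 0) ∧ (∀ j : ℕ, ψ (x - vkaux L j) = 0) := by
    intro L hL k x hx
    have hL0 : (0:ℝ) ≤ L := by linarith
    have hw : ‖x + hv - vkaux L k‖ ≤ R := by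
      rw [Metric.mem_closedBall, dist_eq_norm] at hx
      have he : x + hv - vkaux L k = x - (vkaux L k - hv) := by abel
      rw [he]
      exact hx
    constructor
    · intro j hjk
      apply psi_zero_aux hRs
      have he : x + hv - vkaux L j = (vkaux L k - vkaux L j) + (x + hv - vkaux L k) := by abel
      rw [he]
      have := norm_add_lower (le_vk_sub_norm hL0 (Ne.symm hjk)) hw
      linarith
    · intro j
      apply psi_zero_aux hRs
      by_cases hjk : j = k
      · subst hjk
        have he : x - vkaux L j = (-hv) + (x + hv - vkaux L j) := by abel
        rw [he]
        have hnv' : δ ≤ ‖-hv‖ := by rw [norm_neg, hnv]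
        have := norm_add_lower hnv' hw
        rw [hδdef] at this
        linarith
      · have he : x - vkaux L j = (vkaux L k - vkaux L j) + ((x + hv - vkaux L k) - hv) := by abel
        rw [he]
        have hwh : ‖(x + hv - vkaux L k) - hv‖ ≤ R + δ := by
          calc ‖(x + hv - vkaux L k) - hv‖ ≤ ‖x + hv - vkaux L k‖ + ‖hv‖ := norm_sub_le _ _
            _ ≤ R + δ := by rw [hnv]; linarith
        have := norm_add_lower (le_vk_sub_norm hL0 (fun hh => hjk hh.symm)) hwh
        rw [hδdef] at this
        linarith
  constructor
  · refine ⟨6*R+6, by linarith, C, hCpos, c, hcpos, 1, fun L hL N => ⟨?_, ?_⟩⟩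
    · -- weak L3 bound for the finite sum
      apply weakBoundAux hR hM L
      intro y hy
      obtain ⟨k, hkmem, hkne⟩ := Finset.exists_ne_zero_of_sum_ne_zero hy
      obtain ⟨hk1, hkN⟩ := Finset.mem_Icc.mp hkmem
      have hkpos : (0:ℝ) < k := by exact_mod_cast hk1
      have hψk : ψ (y - vkaux L k) ≠ 0 := right_ne_zero_of_mul hkne
      refine ⟨k, hk1, ?_, ?_⟩
      · have hsum : (∑ j ∈ Finset.Icc 1 N, (j:ℝ) ^ (-(1:ℝ)/3) *
            ψ (y - ((j:ℝ) * L) • EuclideanSpace.single (0:Fin 3) (1:ℝ)))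
            = (k:ℝ) ^ (-(1:ℝ)/3) * ψ (y - vkaux L k) := by
          refine Finset.sum_eq_single_of_mem k hkmem fun j hj hjk => ?_
          have hz : ψ (y - vkaux L j) = 0 := huniq L hL y j k hjk hψk
          show (j:ℝ) ^ (-(1:ℝ)/3) * ψ (y - vkaux L j) = 0
          rw [hz, mul_zero]
        show |∑ j ∈ Finset.Icc 1 N, (j:ℝ) ^ (-(1:ℝ)/3) *
            ψ (y - ((j:ℝ) * L) • EuclideanSpace.single (0:Fin 3) (1:ℝ))| ≤ _
        rw [hsum, abs_mul, abs_of_nonneg (Real.rpow_nonneg hkpos.le _)]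
        exact mul_le_mul_of_nonneg_left (hMb _) (Real.rpow_nonneg hkpos.le _)
      · rw [Metric.mem_closedBall, dist_eq_norm]
        exact psi_norm_le_aux hRs hψk
    · -- Besov lower bound for the finite sum
      intro hN1
      have hNpos : (0:ℝ) < N := by exact_mod_cast hN1
      set FN : EuclideanSpace ℝ (Fin 3) → ℝ := fun y => ∑ k ∈ Finset.Icc 1 N,
        (k : ℝ) ^ (-(1 : ℝ) / 3) *
          ψ (y - ((k : ℝ) * L) • EuclideanSpace.single (0 : Fin 3) (1 : ℝ)) with hFNdef
      have hΔ : ∀ k, 1 ≤ k → k ≤ N → ∀ x ∈ Metric.closedBall (vkaux L k - hv) R,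
          FN (x + hv) - FN x = (k:ℝ) ^ (-(1:ℝ)/3) * ψ (x + hv - vkaux L k) := by
        intro k hk1 hkN x hx
        obtain ⟨hz1, hz2⟩ := hptest L hL k x hx
        have hfirst : FN (x + hv) = (k:ℝ) ^ (-(1:ℝ)/3) * ψ (x + hv - vkaux L k) := by
          rw [hFNdef]
          refine Finset.sum_eq_single_of_mem k (Finset.mem_Icc.mpr ⟨hk1, hkN⟩) fun j hj hjk => ?_
          show (j:ℝ) ^ (-(1:ℝ)/3) * ψ (x + hv - vkaux L j) = 0
          rw [hz1 j hjk, mul_zero]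
        have hsecond : FN x = 0 := by
          rw [hFNdef]
          refine Finset.sum_eq_zero fun j hj => ?_
          show (j:ℝ) ^ (-(1:ℝ)/3) * ψ (x - vkaux L j) = 0
          rw [hz2 j, mul_zero]
        rw [hfirst, hsecond, sub_zero]
      have hkey := keyLowerAux ψ hR hRs (show 2*R < L by linarith) hv N
        (fun x => FN (x + hv) - FN x) hΔ
      have hbes := besovLowerAux FN hvne (ENNReal.ofReal ((N:ℝ)^((1:ℝ)/3)) * Eψ) hkey
      refine le_trans ?_ hbes
      rw [hnv]
      have hEr : Eψ = ENNReal.ofReal eR := (ENNReal.ofReal_toReal hEtop).symm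
      rw [hEr, ← ENNReal.ofReal_mul (by positivity),
        ENNReal.ofReal_rpow_of_pos (by positivity), ← ENNReal.ofReal_mul (by positivity)]
      apply ENNReal.ofReal_le_ofReal
      rw [Real.mul_rpow (by positivity) (by positivity), ← Real.rpow_mul hNpos.le,
        show (1:ℝ)/3 * ((1:ℝ)/2) = (1:ℝ)/6 by norm_num, hcdef]
      exact le_of_eq (by ring)
  · -- the single function with infinite Besov norm
    set L : ℝ := 6*R+6 with hLdef
    have hL : 6*R+6 ≤ L := le_refl _
    refine ⟨fun y => ∑' k : ℕ, (k:ℝ) ^ (-(1:ℝ)/3) * ψ (y - vkaux L k), ?_, ?_⟩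
    · -- finite weak norm
      refine lt_of_le_of_lt (weakBoundAux hR hM L _ ?_) ENNReal.ofReal_lt_top
      intro y hy
      have hex : ∃ k : ℕ, (k:ℝ) ^ (-(1:ℝ)/3) * ψ (y - vkaux L k) ≠ 0 := by
        by_contra hcon
        push_neg at hcon
        exact hy ((tsum_congr hcon).trans tsum_zero)
      obtain ⟨k, hkne⟩ := hex
      have hk1 : 1 ≤ k := by
        rcases Nat.eq_zero_or_pos k with h0 | h
        · exfalso
          apply hkne
          rw [h0]
          simp [Real.zero_rpow (show -(1:ℝ)/3 ≠ 0 by norm_num)]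
        · exact h
      have hkpos : (0:ℝ) < k := by exact_mod_cast hk1
      have hψk : ψ (y - vkaux L k) ≠ 0 := right_ne_zero_of_mul hkne
      refine ⟨k, hk1, ?_, ?_⟩
      · have hsum : (∑' j : ℕ, (j:ℝ) ^ (-(1:ℝ)/3) * ψ (y - vkaux L j))
            = (k:ℝ) ^ (-(1:ℝ)/3) * ψ (y - vkaux L k) := by
          refine tsum_eq_single k fun j hjk => ?_
          rw [huniq L hL y j k hjk hψk, mul_zero]
        rw [hsum, abs_mul, abs_of_nonneg (Real.rpow_nonneg hkpos.le _)]
        exact mul_le_mul_of_nonneg_left (hMb _) (Real.rpow_nonneg hkpos.le _)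
      · rw [Metric.mem_closedBall, dist_eq_norm]
        exact psi_norm_le_aux hRs hψk
    · -- infinite Besov norm
      set f : EuclideanSpace ℝ (Fin 3) → ℝ :=
        fun y => ∑' k : ℕ, (k:ℝ) ^ (-(1:ℝ)/3) * ψ (y - vkaux L k) with hfdef
      have hΔ : ∀ k : ℕ, 1 ≤ k → ∀ x ∈ Metric.closedBall (vkaux L k - hv) R,
          f (x + hv) - f x = (k:ℝ) ^ (-(1:ℝ)/3) * ψ (x + hv - vkaux L k) := by
        intro k hk1 x hx
        obtain ⟨hz1, hz2⟩ := hptest L hL k x hx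
        have hfirst : f (x + hv) = (k:ℝ) ^ (-(1:ℝ)/3) * ψ (x + hv - vkaux L k) := by
          rw [hfdef]
          refine tsum_eq_single k fun j hjk => ?_
          show (j:ℝ) ^ (-(1:ℝ)/3) * ψ ((x + hv) - vkaux L j) = 0
          rw [show (x + hv) - vkaux L j = x + hv - vkaux L j from rfl, hz1 j hjk, mul_zero]
        have hsecond : f x = 0 := by
          rw [hfdef]
          refine (tsum_congr fun j => ?_).trans tsum_zero
          show (j:ℝ) ^ (-(1:ℝ)/3) * ψ (x - vkaux L j) = (0:ℝ)
          rw [hz2 j, mul_zero]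
        rw [hfirst, hsecond, sub_zero]
      set I := ∫⁻ x, ENNReal.ofReal ((f (x + hv) - f x)^2) with hIdef
      have hkeyN : ∀ N : ℕ, ENNReal.ofReal ((N:ℝ)^((1:ℝ)/3)) * Eψ ≤ I := by
        intro N
        exact keyLowerAux ψ hR hRs (show 2*R < L by linarith) hv N _
          (fun k hk1 hkN x hx => hΔ k hk1 x hx)
      have hmul : ∀ n : ℕ, (n:ℝ≥0∞) * Eψ ≤ I := by
        intro n
        have h := hkeyN (n^3)
        have hcast : ENNReal.ofReal (((n^3:ℕ):ℝ)^((1:ℝ)/3)) = (n:ℝ≥0∞) := by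
          push_cast
          rw [← Real.rpow_natCast (n:ℝ) 3, ← Real.rpow_mul (Nat.cast_nonneg n)]
          norm_num [ENNReal.ofReal_natCast]
        rwa [hcast] at h
      have hItop : I = ⊤ := by
        rw [eq_top_iff]
        calc (⊤:ℝ≥0∞) = ⊤ * Eψ := (ENNReal.top_mul hEne).symm
          _ = (⨆ n : ℕ, (n:ℝ≥0∞)) * Eψ := by rw [ENNReal.iSup_natCast]
          _ = ⨆ n : ℕ, (n:ℝ≥0∞) * Eψ := by rw [ENNReal.iSup_mul]
          _ ≤ I := iSup_le hmul
      rw [eq_top_iff]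
      have hbes := besovLowerAux f hvne ⊤ (hItop.ge.trans (le_refl I))
      have hne0 : ENNReal.ofReal (‖hv‖ ^ (-(1:ℝ)/2)) ≠ 0 := by
        rw [hnv]
        exact (ENNReal.ofReal_pos.mpr (Real.rpow_pos_of_pos hδpos _)).ne'
      rwa [ENNReal.top_rpow_of_pos (by norm_num), ENNReal.mul_top hne0] at hbes
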